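/- Let R = F_p[ζ_2, ζ_3, …] ⊗ Λ(τ̄_3, τ̄_4, …) ⊆ B₂, which is stable under Q_0 and Q_1. Then the Q_0-Margolis homology of R is F_p[ζ_2] (the subalgebra F_p[ζ_2] maps isomorphically onto ker(Q_0|_R)/im(Q_0|_R)), and the Q_1-Margolis homology of R is T_1(ζ_2, ζ_3, …) (the span of monomials in ζ_2, ζ_3, … with all exponents < p maps isomorphically onto ker(Q_1|_R)/im(Q_1|_R)). -/

import Mathlib

/-- A monomial of `B n = F_p[ζ₁, ζ₂, …] ⊗ Λ(τ̄_{n+1}, τ̄_{n+2}, …)`: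
`e k` is the exponent of `ζ_k` (with `e 0 = 0`, i.e. no `ζ₀`), and
`t` is the set of indices `m` of the exterior generators `τ̄_m` occurring
(all of which satisfy `m ≥ n + 1`). -/
structure Mono (n : ℕ) where
  e : ℕ →₀ ℕ
  t : Finset ℕ
  he : e 0 = 0
  ht : ∀ m ∈ t, n + 1 ≤ m

/-- `B p n` models `A//E(n)_* = F_p[ζ₁, ζ₂, …] ⊗ Λ(τ̄_{n+1}, …)` as the free
`F_p`-vector space on its monomial basis. -/
abbrev B (p n : ℕ) : Type := Mono n →₀ ZMod p

namespace Mono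

variable {n : ℕ}

/-- Internal (topological) degree of a monomial: `deg ζ_k = 2(p^k − 1)`,
`deg τ̄_m = 2p^m − 1`. -/
def deg (p : ℕ) (x : Mono n) : ℕ :=
  x.e.sum (fun k a => a * (2 * (p ^ k - 1))) + ∑ m ∈ x.t, (2 * p ^ m - 1)

/-- Weight of a monomial: `wt ζ_k = wt τ̄_k = p^k`, extended additively. -/
def wt (p : ℕ) (x : Mono n) : ℕ :=
  x.e.sum (fun k a => a * p ^ k) + ∑ m ∈ x.t, p ^ m

/-- Length of a monomial: the number of exterior factors `τ̄_m` occurring in it. -/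
def len (x : Mono n) : ℕ := x.t.card

end Mono

/-- The monomial obtained from `x` by the Milnor operation `Q_r` acting on the
exterior factor `τ̄_m`: remove `τ̄_m` and multiply by `ζ_{m−r}^{p^r}`
(with the convention `ζ₀ = 1`, i.e. if `m ≤ r` nothing is added). -/
noncomputable def Qtarget (p r : ℕ) {n : ℕ} (x : Mono n) (m : ℕ) : Mono n where
  e := if r < m then x.e + Finsupp.single (m - r) (p ^ r) else x.e
  t := x.t.erase m
  he := by
    by_cases h : r < m
    · simp [if_pos h, Finsupp.single_apply, x.he, Nat.sub_ne_zero_of_lt h]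
    · simp [if_neg h, x.he]
  ht := fun m' hm' => x.ht m' (Finset.mem_of_mem_erase hm')

/-- Value of the Milnor operation `Q_r` on a basis monomial: the signed sum over the
exterior factors `τ̄_m` of `x`, the sign being the Koszul sign `(−1)^{#{m' ∈ t, m' < m}}`. -/
noncomputable def Qmono (p r : ℕ) {n : ℕ} (x : Mono n) : B p n :=
  ∑ m ∈ x.t, ((-1 : ZMod p) ^ ((x.t.filter (fun m' => m' < m)).card)) •
    Finsupp.single (Qtarget p r x m) (1 : ZMod p)

/-- The Milnor operation `Q_r : B_n → B_n`, the unique graded derivation with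
`Q_r ζ_k = 0` and `Q_r τ̄_m = ζ_{m−r}^{p^r}`. -/
noncomputable def Qop (p n r : ℕ) : B p n →ₗ[ZMod p] B p n :=
  Finsupp.lsum (ZMod p) fun x => LinearMap.toSpanSingleton (ZMod p) (B p n) (Qmono p r x)

/-- The span of the set of monomials satisfying a predicate `P`. -/
noncomputable def monSpan (p n : ℕ) (P : Mono n → Prop) : Submodule (ZMod p) (B p n) :=
  Submodule.span (ZMod p) ((fun x => Finsupp.single x (1 : ZMod p)) '' {x | P x})

/-- `R = F_p[ζ₂, ζ₃, …] ⊗ Λ(τ̄₃, τ̄₄, …) ⊆ B₂`: the span of the monomials not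
involving `ζ₁`. -/
noncomputable def Rsub (p : ℕ) : Submodule (ZMod p) (B p 2) := monSpan p 2 (fun x => x.e 1 = 0)

/-!
For `r ≤ n`, `Q_r` pairs the monomial `x · τ̄_m` with `x · ζ_{m-r}^{p^r}`. Acting at the least
index `m` at which such a pair occurs gives a chain homotopy `h` with `Q_r h + h Q_r = 1 - π`,
where `π` projects onto the monomials admitting no such index, and `π Q_r = 0`. Since `h` and
`Q_r` (for `r ≤ 1`) never create `ζ₁`, they preserve `R`, so the Margolis homology of `R` is
spanned by its monomials without pair indices: the powers of `ζ₂` for `r = 0`, and the monomials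
in `ζ₂, ζ₃, …` with all exponents `< p` for `r = 1`.
-/

variable {p n r : ℕ}

namespace Mono

theorem ext {x y : Mono n} (he : x.e = y.e) (ht : x.t = y.t) : x = y := by
  cases x; cases y; subst he ht; rfl

/-- `m` lies in `x.pairIndices p r` when `τ̄_m` or `ζ_{m-r}^{p^r}` divides `x`: the two monomials
that `Q_r` pairs off at the index `m`. -/
def pairIndices (p r : ℕ) (x : Mono n) : Finset ℕ :=
  x.t ∪ ((x.e.support.filter fun k => p ^ r ≤ x.e k ∧ n + 1 ≤ k + r).image (· + r))

theorem mem_pairIndices (hp : 0 < p) {x : Mono n} {m : ℕ} :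
    m ∈ x.pairIndices p r ↔ m ∈ x.t ∨ (n + 1 ≤ m ∧ p ^ r ≤ x.e (m - r)) := by
  have hpr : 0 < p ^ r := pow_pos hp r
  simp only [pairIndices, Finset.mem_union, Finset.mem_image, Finset.mem_filter,
    Finsupp.mem_support_iff]
  constructor
  · rintro (h | ⟨k, ⟨-, hk, hkr⟩, rfl⟩)
    · exact Or.inl h
    · exact Or.inr ⟨hkr, by simpa using hk⟩
  · rintro (h | ⟨hm, hk⟩)
    · exact Or.inl h
    · -- for `m < r`, `m - r` truncates to `0`, and `ζ₀` has exponent `0 < p ^ r`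
      have hrm : r ≤ m := by
        by_contra h
        rw [Nat.sub_eq_zero_of_le (by omega), x.he] at hk
        omega
      exact Or.inr ⟨m - r, ⟨by omega, hk, by omega⟩, by omega⟩

theorem le_of_mem_pairIndices {x : Mono n} {m : ℕ} (h : m ∈ x.pairIndices p r) : n + 1 ≤ m := by
  simp only [pairIndices, Finset.mem_union, Finset.mem_image, Finset.mem_filter] at h
  rcases h with h | ⟨k, ⟨-, -, hk⟩, rfl⟩
  · exact x.ht m h
  · exact hk

theorem pairIndices_eq_empty_iff (hp : 0 < p) {x : Mono n} :
    x.pairIndices p r = ∅ ↔ x.t = ∅ ∧ ∀ m, n + 1 ≤ m → x.e (m - r) < p ^ r := by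
  simp only [Finset.eq_empty_iff_forall_notMem, mem_pairIndices hp, not_or, not_and, not_le]
  exact ⟨fun h => ⟨fun m => (h m).1, fun m => (h m).2⟩, fun h m => ⟨h.1 m, h.2 m⟩⟩

end Mono

theorem Qtarget_t (p r : ℕ) (x : Mono n) (m : ℕ) : (Qtarget p r x m).t = x.t.erase m := rfl

theorem Qtarget_e_of_mem (hr : r ≤ n) {x : Mono n} {m : ℕ} (hm : m ∈ x.t) :
    (Qtarget p r x m).e = x.e + Finsupp.single (m - r) (p ^ r) := by
  have : r < m := by have := x.ht m hm; omega
  simp only [Qtarget, if_pos this]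

/-- Replaces `ζ_{m-r}^{p^r}` by `τ̄_m`; inverse to `Qtarget · · · m`. -/
noncomputable def Qsource (p r : ℕ) (x : Mono n) (m : ℕ) (hm : n + 1 ≤ m) : Mono n where
  e := x.e - Finsupp.single (m - r) (p ^ r)
  t := insert m x.t
  he := by simp [x.he]
  ht := Finset.forall_mem_insert _ _ _ |>.2 ⟨hm, x.ht⟩

theorem Qsource_e (p r : ℕ) (x : Mono n) (m : ℕ) (hm : n + 1 ≤ m) :
    (Qsource p r x m hm).e = x.e - Finsupp.single (m - r) (p ^ r) := rfl

theorem Qsource_t (p r : ℕ) (x : Mono n) (m : ℕ) (hm : n + 1 ≤ m) :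
    (Qsource p r x m hm).t = insert m x.t := rfl

theorem Qtarget_Qsource (hr : r ≤ n) {x : Mono n} {m : ℕ} (hm : n + 1 ≤ m) (hmt : m ∉ x.t)
    (hx : p ^ r ≤ x.e (m - r)) : Qtarget p r (Qsource p r x m hm) m = x :=
  Mono.ext
    (by rw [Qtarget_e_of_mem hr (Finset.mem_insert_self m x.t), Qsource_e,
      tsub_add_cancel_of_le (Finsupp.single_le_iff.2 hx)])
    (by rw [Qtarget_t, Qsource_t, Finset.erase_insert hmt])

theorem Qsource_Qtarget (hr : r ≤ n) {x : Mono n} {m : ℕ} (hm : n + 1 ≤ m) (hmt : m ∈ x.t) :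
    Qsource p r (Qtarget p r x m) m hm = x :=
  Mono.ext (by rw [Qsource_e, Qtarget_e_of_mem hr hmt, add_tsub_cancel_right])
    (by rw [Qsource_t, Qtarget_t, Finset.insert_erase hmt])

theorem Qtarget_Qsource_comm (hr : r ≤ n) {x : Mono n} {m m₀ : ℕ} (hm₀ : n + 1 ≤ m₀)
    (hmt : m ∈ x.t) (hne : m₀ ≠ m) (hx : p ^ r ≤ x.e (m₀ - r)) :
    Qtarget p r (Qsource p r x m₀ hm₀) m = Qsource p r (Qtarget p r x m) m₀ hm₀ := by
  have hm : n + 1 ≤ m := x.ht m hmt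
  refine Mono.ext ?_ ?_
  · rw [Qtarget_e_of_mem hr (Finset.mem_insert_of_mem hmt), Qsource_e, Qsource_e,
      Qtarget_e_of_mem hr hmt, tsub_add_eq_add_tsub (Finsupp.single_le_iff.2 hx)]
  · rw [Qtarget_t, Qsource_t, Qsource_t, Qtarget_t, Finset.erase_insert_of_ne hne]

theorem Qop_single (p n r : ℕ) (x : Mono n) : Qop p n r (Finsupp.single x 1) = Qmono p r x := by
  simp [Qop]

theorem Qmono_of_t_eq_insert {y : Mono n} {s : Finset ℕ} {m₀ : ℕ} (hy : y.t = insert m₀ s)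
    (hlt : ∀ m ∈ s, m₀ < m) :
    Qmono p r y = Finsupp.single (Qtarget p r y m₀) 1 -
      ∑ m ∈ s, (-1 : ZMod p) ^ (s.filter (· < m)).card • Finsupp.single (Qtarget p r y m) 1 := by
  have hm₀ : m₀ ∉ s := fun h => lt_irrefl _ (hlt m₀ h)
  have hsign₀ : (insert m₀ s).filter (· < m₀) = ∅ :=
    Finset.filter_eq_empty_iff.2 fun m hm => by
      rcases Finset.mem_insert.1 hm with rfl | h
      · exact lt_irrefl m
      · exact (hlt m h).not_gt
  have hsign : ∀ m ∈ s, (insert m₀ s).filter (· < m) = insert m₀ (s.filter (· < m)) :=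
    fun m hm => by rw [Finset.filter_insert, if_pos (hlt m hm)]
  rw [Qmono, hy, Finset.sum_insert hm₀, hsign₀, Finset.card_empty, pow_zero, one_smul,
    sub_eq_add_neg, ← Finset.sum_neg_distrib]
  refine congrArg _ (Finset.sum_congr rfl fun m hm => ?_)
  rw [hsign m hm, Finset.card_insert_of_notMem fun h => hm₀ (Finset.mem_of_mem_filter m₀ h),
    pow_succ, mul_neg_one, neg_smul]

noncomputable def QhomotopyMono (p r : ℕ) (x : Mono n) : B p n :=
  if hD : (x.pairIndices p r).Nonempty then
    if (x.pairIndices p r).min' hD ∈ x.t then 0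
    else Finsupp.single (Qsource p r x _ (Mono.le_of_mem_pairIndices (Finset.min'_mem _ hD))) 1
  else 0

noncomputable def Qhomotopy (p n r : ℕ) : B p n →ₗ[ZMod p] B p n :=
  Finsupp.linearCombination (ZMod p) (QhomotopyMono p r)

noncomputable def reducedProj (p n r : ℕ) : B p n →ₗ[ZMod p] B p n :=
  Finsupp.linearCombination (ZMod p) fun x =>
    if x.pairIndices p r = ∅ then Finsupp.single x 1 else 0

theorem Qhomotopy_single (p n r : ℕ) (x : Mono n) :
    Qhomotopy p n r (Finsupp.single x 1) = QhomotopyMono p r x := by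
  simp [Qhomotopy]

theorem reducedProj_single (p n r : ℕ) (x : Mono n) :
    reducedProj p n r (Finsupp.single x 1) =
      if x.pairIndices p r = ∅ then Finsupp.single x 1 else 0 := by
  simp [reducedProj]

theorem Qhomotopy_Qmono (p n r : ℕ) (x : Mono n) :
    Qhomotopy p n r (Qmono p r x) = ∑ m ∈ x.t,
      (-1 : ZMod p) ^ (x.t.filter (· < m)).card • QhomotopyMono p r (Qtarget p r x m) := by
  simp only [Qmono, map_sum, map_smul, Qhomotopy_single]

theorem QhomotopyMono_of_eq_empty {x : Mono n} (hD : x.pairIndices p r = ∅) :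
    QhomotopyMono p r x = 0 := by
  rw [QhomotopyMono, dif_neg (Finset.not_nonempty_iff_eq_empty.2 hD)]

theorem QhomotopyMono_of_mem {x : Mono n} {m₀ : ℕ} (hD : IsLeast ↑(x.pairIndices p r) m₀)
    (hm₀ : m₀ ∈ x.t) : QhomotopyMono p r x = 0 := by
  have hne : (x.pairIndices p r).Nonempty := ⟨m₀, hD.1⟩
  have hmin : (x.pairIndices p r).min' hne = m₀ := (Finset.isLeast_min' _ hne).unique hD
  rw [QhomotopyMono, dif_pos hne, if_pos (hmin ▸ hm₀)]

theorem QhomotopyMono_of_notMem {x : Mono n} {m₀ : ℕ} (hD : IsLeast ↑(x.pairIndices p r) m₀)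
    (hm₀ : m₀ ∉ x.t) :
    QhomotopyMono p r x = Finsupp.single (Qsource p r x m₀ (Mono.le_of_mem_pairIndices hD.1)) 1 := by
  have hne : (x.pairIndices p r).Nonempty := ⟨m₀, hD.1⟩
  have hmin : (x.pairIndices p r).min' hne = m₀ := (Finset.isLeast_min' _ hne).unique hD
  rw [QhomotopyMono, dif_pos hne, if_neg (hmin ▸ hm₀)]
  simp only [hmin]

section Homotopy

variable (hp : 0 < p) (hr : r ≤ n)
include hp hr

theorem isLeast_pairIndices_Qtarget {x : Mono n} {m m₀ : ℕ} (hm : m ∈ x.t)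
    (hD : IsLeast ↑(x.pairIndices p r) m₀) :
    IsLeast ↑((Qtarget p r x m).pairIndices p r) m₀ := by
  have hm' : n + 1 ≤ m := x.ht m hm
  simp only [IsLeast, lowerBounds, Finset.mem_coe, Mono.mem_pairIndices hp,
    Qtarget_t, Qtarget_e_of_mem hr hm, Finsupp.add_apply, Finset.mem_erase] at hD ⊢
  obtain ⟨hm₀, hmin⟩ := hD
  refine ⟨?_, fun m' hm'' => ?_⟩
  · by_cases h : m₀ = m
    · subst h
      exact Or.inr ⟨hm', by simp⟩
    · rcases hm₀ with hm₀ | ⟨h1, h2⟩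
      · exact Or.inl ⟨h, hm₀⟩
      · exact Or.inr ⟨h1, h2.trans (Nat.le_add_right _ _)⟩
  · by_cases h : m' = m
    · exact h ▸ hmin (Or.inl hm)
    · rcases hm'' with ⟨-, hm''⟩ | ⟨h1, h2⟩
      · exact hmin (Or.inl hm'')
      · rw [Finsupp.single_eq_of_ne (by omega), add_zero] at h2
        exact hmin (Or.inr ⟨h1, h2⟩)

theorem Qhomotopy_Qmono_of_isLeast_mem {x : Mono n} {m₀ : ℕ}
    (hD : IsLeast ↑(x.pairIndices p r) m₀) (hm₀ : m₀ ∈ x.t) :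
    Qhomotopy p n r (Qmono p r x) = Finsupp.single x 1 := by
  rw [Qhomotopy_Qmono, Finset.sum_eq_single m₀ ?_ (absurd hm₀)]
  · have hsign : x.t.filter (· < m₀) = ∅ :=
      Finset.filter_eq_empty_iff.2 fun m hm => not_lt.2 (hD.2 (Finset.mem_union_left _ hm))
    rw [hsign, Finset.card_empty, pow_zero, one_smul,
      QhomotopyMono_of_notMem (isLeast_pairIndices_Qtarget hp hr hm₀ hD)
        (Finset.notMem_erase m₀ x.t), Qsource_Qtarget hr _ hm₀]
  · intro m hm hne
    rw [QhomotopyMono_of_mem (isLeast_pairIndices_Qtarget hp hr hm hD)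
      (Finset.mem_erase.2 ⟨Ne.symm hne, hm₀⟩), smul_zero]

theorem Qop_QhomotopyMono_add_of_isLeast_notMem {x : Mono n} {m₀ : ℕ}
    (hD : IsLeast ↑(x.pairIndices p r) m₀) (hm₀ : m₀ ∉ x.t) :
    Qop p n r (QhomotopyMono p r x) + Qhomotopy p n r (Qmono p r x) = Finsupp.single x 1 := by
  have hle : n + 1 ≤ m₀ := Mono.le_of_mem_pairIndices hD.1
  have hx : p ^ r ≤ x.e (m₀ - r) :=
    (((Mono.mem_pairIndices hp).1 hD.1).resolve_left hm₀).2
  have hlt : ∀ m ∈ x.t, m₀ < m := fun m hm =>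
    (hD.2 (Finset.mem_union_left _ hm)).lt_of_ne fun h => hm₀ (h ▸ hm)
  have hQh : Qhomotopy p n r (Qmono p r x) = ∑ m ∈ x.t, (-1 : ZMod p) ^ (x.t.filter (· < m)).card •
      Finsupp.single (Qtarget p r (Qsource p r x m₀ hle) m) 1 := by
    refine (Qhomotopy_Qmono p n r x).trans (Finset.sum_congr rfl fun m hm => ?_)
    rw [QhomotopyMono_of_notMem (isLeast_pairIndices_Qtarget hp hr hm hD)
      fun h => hm₀ (Finset.mem_of_mem_erase h),
      Qtarget_Qsource_comm hr hle hm (hlt m hm).ne hx]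
  rw [QhomotopyMono_of_notMem hD hm₀, Qop_single, Qmono_of_t_eq_insert (Qsource_t ..) hlt,
    Qtarget_Qsource hr hle hm₀ hx, hQh, sub_add_cancel]

theorem Qop_QhomotopyMono_add (x : Mono n) :
    Qop p n r (QhomotopyMono p r x) + Qhomotopy p n r (Qmono p r x) =
      Finsupp.single x 1 - reducedProj p n r (Finsupp.single x 1) := by
  rw [reducedProj_single]
  by_cases hD : x.pairIndices p r = ∅
  · have ht : x.t = ∅ := ((Mono.pairIndices_eq_empty_iff hp).1 hD).1
    rw [if_pos hD, QhomotopyMono_of_eq_empty hD, Qmono, ht, Finset.sum_empty, map_zero, map_zero,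
      add_zero, sub_self]
  · have hne := Finset.nonempty_iff_ne_empty.2 hD
    have hmin := Finset.isLeast_min' _ hne
    rw [if_neg hD, sub_zero]
    by_cases hm₀ : (x.pairIndices p r).min' hne ∈ x.t
    · rw [QhomotopyMono_of_mem hmin hm₀, map_zero, zero_add,
        Qhomotopy_Qmono_of_isLeast_mem hp hr hmin hm₀]
    · exact Qop_QhomotopyMono_add_of_isLeast_notMem hp hr hmin hm₀

theorem Qop_comp_Qhomotopy_add :
    Qop p n r ∘ₗ Qhomotopy p n r + Qhomotopy p n r ∘ₗ Qop p n r =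
      LinearMap.id - reducedProj p n r := by
  ext x : 2
  simpa [Qhomotopy_single, Qop_single] using Qop_QhomotopyMono_add hp hr x

theorem reducedProj_comp_Qop : reducedProj p n r ∘ₗ Qop p n r = 0 := by
  ext x : 2
  simp only [LinearMap.comp_apply, Finsupp.lsingle_apply, Qop_single, LinearMap.zero_apply, Qmono,
    map_sum, map_smul, reducedProj_single]
  refine Finset.sum_eq_zero fun m hm => ?_
  have hD : m ∈ (Qtarget p r x m).pairIndices p r := by
    rw [Mono.mem_pairIndices hp, Qtarget_e_of_mem hr hm]
    exact Or.inr ⟨x.ht m hm, by simp⟩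
  rw [if_neg (Finset.ne_empty_of_mem hD), smul_zero]

end Homotopy

section ChainHomotopy

variable {R V : Type*} [Ring R] [AddCommGroup V] [Module R V] {d h π : V →ₗ[R] V}
  {W H : Submodule R V}

theorem inf_map_eq_bot_of_comp_eq_zero (hπd : π ∘ₗ d = 0)
    (hπH : H ≤ LinearMap.eqLocus π LinearMap.id) : H ⊓ W.map d = ⊥ := by
  rw [eq_bot_iff]
  rintro v ⟨hvH, w, -, hw⟩
  have hπv : π v = v := hπH hvH
  rw [Submodule.mem_bot, ← hπv, ← hw]
  exact LinearMap.congr_fun hπd w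

theorem inf_ker_le_sup_map_of_homotopy (hhtpy : d ∘ₗ h + h ∘ₗ d = LinearMap.id - π)
    (hhW : W.map h ≤ W) (hπW : W.map π ≤ H) : W ⊓ LinearMap.ker d ≤ H ⊔ W.map d := by
  rintro v ⟨hvW, hvd⟩
  have hv : v = π v + d (h v) := by
    have := LinearMap.congr_fun hhtpy v
    simp only [LinearMap.add_apply, LinearMap.comp_apply, LinearMap.mem_ker.1 hvd, map_zero,
      add_zero, LinearMap.sub_apply, LinearMap.id_apply] at this
    rw [this, add_sub_cancel]
  rw [hv]
  exact Submodule.add_mem_sup (hπW (Submodule.mem_map_of_mem hvW))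
    (Submodule.mem_map_of_mem (hhW (Submodule.mem_map_of_mem hvW)))

end ChainHomotopy

theorem single_mem_monSpan {P : Mono n → Prop} {x : Mono n} (hx : P x) :
    Finsupp.single x 1 ∈ monSpan p n P :=
  Submodule.subset_span ⟨x, hx, rfl⟩

theorem monSpan_le_iff {P : Mono n → Prop} {N : Submodule (ZMod p) (B p n)} :
    monSpan p n P ≤ N ↔ ∀ x, P x → Finsupp.single x 1 ∈ N := by
  simp [monSpan, Submodule.span_le, Set.subset_def]

theorem map_monSpan_le_iff {P : Mono n → Prop} {f : B p n →ₗ[ZMod p] B p n}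
    {N : Submodule (ZMod p) (B p n)} :
    (monSpan p n P).map f ≤ N ↔ ∀ x, P x → f (Finsupp.single x 1) ∈ N := by
  simp [monSpan, Submodule.map_span_le]

theorem monSpan_pairIndices_le_eqLocus {P : Mono n → Prop} :
    monSpan p n (fun x => P x ∧ x.pairIndices p r = ∅) ≤
      LinearMap.eqLocus (reducedProj p n r) LinearMap.id :=
  monSpan_le_iff.2 fun x hx => by
    rw [LinearMap.mem_eqLocus, reducedProj_single, if_pos hx.2, LinearMap.id_apply]

theorem monSpan_pairIndices_le_ker (hp : 0 < p) {P : Mono n → Prop} :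
    monSpan p n (fun x => P x ∧ x.pairIndices p r = ∅) ≤ LinearMap.ker (Qop p n r) :=
  monSpan_le_iff.2 fun x hx => by
    rw [LinearMap.mem_ker, Qop_single, Qmono, ((Mono.pairIndices_eq_empty_iff hp).1 hx.2).1,
      Finset.sum_empty]

theorem map_Qop_Rsub_le (hr : r ≤ 1) : (Rsub p).map (Qop p 2 r) ≤ Rsub p :=
  map_monSpan_le_iff.2 fun x hx => by
    rw [Qop_single, Qmono]
    refine Submodule.sum_mem _ fun m hm => Submodule.smul_mem _ _ (single_mem_monSpan ?_)
    have hm3 : 3 ≤ m := x.ht m hm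
    rw [Qtarget_e_of_mem (by omega) hm, Finsupp.add_apply, hx,
      Finsupp.single_eq_of_ne (by omega), add_zero]

theorem map_Qhomotopy_Rsub_le : (Rsub p).map (Qhomotopy p 2 r) ≤ Rsub p :=
  map_monSpan_le_iff.2 fun x hx => by
    rw [Qhomotopy_single, QhomotopyMono]
    split_ifs
    · exact Submodule.zero_mem _
    · exact single_mem_monSpan (by simp [Qsource_e, hx])
    · exact Submodule.zero_mem _

theorem map_reducedProj_Rsub_le :
    (Rsub p).map (reducedProj p 2 r) ≤ monSpan p 2 fun x => x.e 1 = 0 ∧ x.pairIndices p r = ∅ :=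
  map_monSpan_le_iff.2 fun x hx => by
    rw [reducedProj_single]
    split_ifs with hD
    · exact single_mem_monSpan ⟨hx, hD⟩
    · exact Submodule.zero_mem _

theorem margolis_homology_Rsub (hp : 0 < p) (hr : r ≤ 1) :
    monSpan p 2 (fun x => x.e 1 = 0 ∧ x.pairIndices p r = ∅) ≤
        Rsub p ⊓ LinearMap.ker (Qop p 2 r) ∧
      monSpan p 2 (fun x => x.e 1 = 0 ∧ x.pairIndices p r = ∅) ⊓
        (Rsub p).map (Qop p 2 r) = ⊥ ∧
      Rsub p ⊓ LinearMap.ker (Qop p 2 r) ≤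
        monSpan p 2 (fun x => x.e 1 = 0 ∧ x.pairIndices p r = ∅) ⊔ (Rsub p).map (Qop p 2 r) := by
  have hr2 : r ≤ 2 := by omega
  refine ⟨le_inf (monSpan_le_iff.2 fun x hx => single_mem_monSpan hx.1)
    (monSpan_pairIndices_le_ker hp), ?_, ?_⟩
  · exact inf_map_eq_bot_of_comp_eq_zero (reducedProj_comp_Qop hp hr2)
      monSpan_pairIndices_le_eqLocus
  · exact inf_ker_le_sup_map_of_homotopy (Qop_comp_Qhomotopy_add hp hr2)
      map_Qhomotopy_Rsub_le map_reducedProj_Rsub_le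

theorem pairIndices_zero_eq_empty_iff (hp : 0 < p) (x : Mono 2) :
    x.e 1 = 0 ∧ x.pairIndices p 0 = ∅ ↔ x.t = ∅ ∧ ∀ k, k ≠ 2 → x.e k = 0 := by
  simp only [Mono.pairIndices_eq_empty_iff hp, pow_zero, Nat.sub_zero, Nat.lt_one_iff]
  constructor
  · rintro ⟨h1, ht, he⟩
    refine ⟨ht, fun k hk => ?_⟩
    rcases Nat.lt_or_ge k 2 with hk' | hk'
    · interval_cases k
      exacts [x.he, h1]
    · exact he k (by omega)
  · rintro ⟨ht, he⟩
    exact ⟨he 1 (by decide), ht, fun m hm => he m (by omega)⟩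

theorem pairIndices_one_eq_empty_iff (hp : 0 < p) (x : Mono 2) :
    x.e 1 = 0 ∧ x.pairIndices p 1 = ∅ ↔ x.t = ∅ ∧ x.e 1 = 0 ∧ ∀ k, x.e k < p := by
  simp only [Mono.pairIndices_eq_empty_iff hp, pow_one]
  constructor
  · rintro ⟨h1, ht, he⟩
    refine ⟨ht, h1, fun k => ?_⟩
    rcases Nat.lt_or_ge k 2 with hk | hk
    · interval_cases k
      · rwa [x.he]
      · rwa [h1]
    · simpa using he (k + 1) (by omega)
  · rintro ⟨ht, h1, he⟩
    exact ⟨h1, ht, fun m _ => he (m - 1)⟩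

theorem margolis_homology_of_R_general (p : ℕ) (hp : p.Prime) :
    (∀ r ≤ 1, ∀ x ∈ Rsub p, Qop p 2 r x ∈ Rsub p) ∧
    (monSpan p 2 (fun x => x.t = ∅ ∧ ∀ k, k ≠ 2 → x.e k = 0) ≤
        Rsub p ⊓ LinearMap.ker (Qop p 2 0) ∧
      monSpan p 2 (fun x => x.t = ∅ ∧ ∀ k, k ≠ 2 → x.e k = 0) ⊓
        Submodule.map (Qop p 2 0) (Rsub p) = ⊥ ∧
      Rsub p ⊓ LinearMap.ker (Qop p 2 0) ≤
        monSpan p 2 (fun x => x.t = ∅ ∧ ∀ k, k ≠ 2 → x.e k = 0) ⊔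
          Submodule.map (Qop p 2 0) (Rsub p)) ∧
    (monSpan p 2 (fun x => x.t = ∅ ∧ x.e 1 = 0 ∧ ∀ k, x.e k < p) ≤
        Rsub p ⊓ LinearMap.ker (Qop p 2 1) ∧
      monSpan p 2 (fun x => x.t = ∅ ∧ x.e 1 = 0 ∧ ∀ k, x.e k < p) ⊓
        Submodule.map (Qop p 2 1) (Rsub p) = ⊥ ∧
      Rsub p ⊓ LinearMap.ker (Qop p 2 1) ≤
        monSpan p 2 (fun x => x.t = ∅ ∧ x.e 1 = 0 ∧ ∀ k, x.e k < p) ⊔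
          Submodule.map (Qop p 2 1) (Rsub p)) := by
  have hp₀ : 0 < p := hp.pos
  have hred₀ : (fun x : Mono 2 => x.t = ∅ ∧ ∀ k, k ≠ 2 → x.e k = 0) =
      fun x => x.e 1 = 0 ∧ x.pairIndices p 0 = ∅ :=
    funext fun x => propext (pairIndices_zero_eq_empty_iff hp₀ x).symm
  have hred₁ : (fun x : Mono 2 => x.t = ∅ ∧ x.e 1 = 0 ∧ ∀ k, x.e k < p) =
      fun x => x.e 1 = 0 ∧ x.pairIndices p 1 = ∅ :=
    funext fun x => propext (pairIndices_one_eq_empty_iff hp₀ x).symm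
  rw [hred₀, hred₁]
  exact ⟨fun r hr _ hv => map_Qop_Rsub_le hr (Submodule.mem_map_of_mem hv),
    margolis_homology_Rsub hp₀ (Nat.zero_le 1), margolis_homology_Rsub hp₀ le_rfl⟩

/-- `R` is stable under `Q₀` and `Q₁`; its `Q₀`-Margolis homology is
`F_p[ζ₂]` (the span of the powers `ζ₂^k` maps isomorphically onto `ker(Q₀|_R)/im(Q₀|_R)`),
and its `Q₁`-Margolis homology is `T₁(ζ₂, ζ₃, …)` (the span of the monomials in
`ζ₂, ζ₃, …` with all exponents `< p` maps isomorphically onto `ker(Q₁|_R)/im(Q₁|_R)`). -/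
theorem margolis_homology_of_R (p : ℕ) (hp : p.Prime) (hodd : Odd p) :
    (∀ r ≤ 1, ∀ x ∈ Rsub p, Qop p 2 r x ∈ Rsub p) ∧
    (monSpan p 2 (fun x => x.t = ∅ ∧ ∀ k, k ≠ 2 → x.e k = 0) ≤
        Rsub p ⊓ LinearMap.ker (Qop p 2 0) ∧
      monSpan p 2 (fun x => x.t = ∅ ∧ ∀ k, k ≠ 2 → x.e k = 0) ⊓
        Submodule.map (Qop p 2 0) (Rsub p) = ⊥ ∧
      Rsub p ⊓ LinearMap.ker (Qop p 2 0) ≤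
        monSpan p 2 (fun x => x.t = ∅ ∧ ∀ k, k ≠ 2 → x.e k = 0) ⊔
          Submodule.map (Qop p 2 0) (Rsub p)) ∧
    (monSpan p 2 (fun x => x.t = ∅ ∧ x.e 1 = 0 ∧ ∀ k, x.e k < p) ≤
        Rsub p ⊓ LinearMap.ker (Qop p 2 1) ∧
      monSpan p 2 (fun x => x.t = ∅ ∧ x.e 1 = 0 ∧ ∀ k, x.e k < p) ⊓
        Submodule.map (Qop p 2 1) (Rsub p) = ⊥ ∧
      Rsub p ⊓ LinearMap.ker (Qop p 2 1) ≤
        monSpan p 2 (fun x => x.t = ∅ ∧ x.e 1 = 0 ∧ ∀ k, x.e k < p) ⊔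
          Submodule.map (Qop p 2 1) (Rsub p)) :=
  margolis_homology_of_R_general p hp
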